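/- Let m ≥ 0 and let U, V ⊆ ℝᵈ satisfy sup_{z∈U} ‖z‖ < ∞, inf{‖x − y‖ : x ∈ U, y ∈ ℝᵈ∖V} > 0, and inf{‖y‖ : y ∈ ℝᵈ∖V} > 0 (in particular 0 ∈ V). Then there exists C₁ > 0 such that for every x ∈ U and every y ∈ ℝᵈ∖V: C₁ · Ψ(m^{1/α}‖y‖) · ‖x − y‖^{d+α} ≤ Ψ(m^{1/α}‖x − y‖) · max(1, ‖y‖^{d+α}) (equivalently, Ψ(m^{1/α}‖x−y‖)/‖x−y‖^{d+α} ≥ C₁ Ψ(m^{1/α}‖y‖) min(1, ‖y‖^{−(d+α)})). -/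

import Mathlib

/-- `I(r) = ∫₀^∞ s^{(d+α)/2 − 1} e^{−s/4 − r²/s} ds`. -/
noncomputable def Ifun (d : ℕ) (α : ℝ) (r : ℝ) : ℝ :=
  ∫ s in Set.Ioi (0 : ℝ), s ^ (((d : ℝ) + α) / 2 - 1) * Real.exp (-(s / 4) - r ^ 2 / s)

/-- `Ψ(r) = I(r)/I(0)`. -/
noncomputable def Psi (d : ℕ) (α : ℝ) (r : ℝ) : ℝ := Ifun d α r / Ifun d α 0

/-!
Up to normalisation, `Ψ` is `J(r) = ∫₀^∞ s^p e^{-s/4 - r²/s} ds` with `p = (d+α)/2 - 1 > -1`,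
and the heart of the matter is `J(r + b) ≥ c J(r)` for a fixed shift `b ≥ 0`. For `r ≤ 1` this
follows from monotonicity. For `r ≥ 1`, the symmetry `s ↦ 4r²/s` of the exponent shows that
at least half of `J(r)` comes from `s > 2r`, and there `(r+b)²/s ≤ r²/s + b + b²/2`.
With `R = sup_U ‖·‖`, the theorem then follows from `‖x - y‖ ≤ ‖y‖ + R` and
`‖x - y‖ ≤ (1 + R / ε) ‖y‖`.
-/

open MeasureTheory Set Real

noncomputable section

def besselIntegrand (p r s : ℝ) : ℝ := s ^ p * exp (-(s / 4) - r ^ 2 / s)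

def besselIntegral (p r : ℝ) : ℝ := ∫ s in Ioi 0, besselIntegrand p r s

variable {p : ℝ}

lemma besselIntegrand_nonneg (p r : ℝ) {s : ℝ} (hs : 0 ≤ s) :
    0 ≤ besselIntegrand p r s := by
  unfold besselIntegrand; positivity

lemma integrableOn_besselIntegrand (hp : -1 < p) (r : ℝ) :
    IntegrableOn (besselIntegrand p r) (Ioi 0) := by
  have hdom : IntegrableOn (fun s : ℝ => s ^ p * exp (-(1 / 4) * s ^ (1 : ℝ))) (Ioi 0) :=
    integrableOn_rpow_mul_exp_neg_mul_rpow hp zero_lt_one (by norm_num)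
  refine hdom.mono' (by unfold besselIntegrand; fun_prop) ?_
  filter_upwards [ae_restrict_mem measurableSet_Ioi] with s (hs : 0 < s)
  rw [norm_of_nonneg (besselIntegrand_nonneg p r hs.le), rpow_one]
  unfold besselIntegrand
  gcongr
  linarith [div_nonneg (sq_nonneg r) hs.le]

lemma besselIntegral_pos (hp : -1 < p) (r : ℝ) : 0 < besselIntegral p r := by
  refine (setIntegral_pos_iff_support_of_nonneg_ae ?_ (integrableOn_besselIntegrand hp r)).2 ?_
  · filter_upwards [ae_restrict_mem measurableSet_Ioi] with s hs
      using besselIntegrand_nonneg p r (le_of_lt hs)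
  · have : Ioi (0 : ℝ) ⊆ Function.support (besselIntegrand p r) ∩ Ioi 0 :=
      fun s (hs : 0 < s) =>
      ⟨(by unfold besselIntegrand; positivity : 0 < besselIntegrand p r s).ne', hs⟩
    exact (by simp : (0 : ENNReal) < volume (Ioi (0 : ℝ))).trans_le (measure_mono this)

lemma besselIntegral_antitoneOn (hp : -1 < p) : AntitoneOn (besselIntegral p) (Ici 0) := by
  intro r (hr : 0 ≤ r) r' _ hrr'
  refine setIntegral_mono_on (integrableOn_besselIntegrand hp r')
    (integrableOn_besselIntegrand hp r) measurableSet_Ioi fun s (hs : 0 < s) => ?_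
  unfold besselIntegrand
  gcongr

lemma besselIntegrand_four_mul_sq_div (p : ℝ) {r t : ℝ} (hr : 0 < r) (ht : 0 < t) :
    4 * r ^ 2 / t ^ 2 * besselIntegrand p r (4 * r ^ 2 / t) =
      (2 * r / t) ^ (2 * (p + 1)) * besselIntegrand p r t := by
  have hu : 0 < 2 * r / t := by positivity
  have hexp : -(4 * r ^ 2 / t / 4) - r ^ 2 / (4 * r ^ 2 / t) = -(t / 4) - r ^ 2 / t := by
    field_simp; ring
  have hpow : 4 * r ^ 2 / t ^ 2 * (4 * r ^ 2 / t) ^ p = (2 * r / t) ^ (2 * (p + 1)) * t ^ p := by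
    rw [show 4 * r ^ 2 / t = (2 * r / t) ^ 2 * t by field_simp; ring,
      mul_rpow (by positivity) ht.le, ← rpow_natCast_mul hu.le,
      show 2 * (p + 1) = (2 : ℕ) * p + 2 by push_cast; ring, rpow_add hu, rpow_two]
    field_simp; ring
  unfold besselIntegrand
  rw [hexp, ← mul_assoc, hpow, mul_assoc]

lemma image_four_mul_sq_div_Ioi {r : ℝ} (hr : 0 < r) :
    (fun t => 4 * r ^ 2 / t) '' Ioi (2 * r) = Ioo 0 (2 * r) := by
  ext s
  constructor
  · rintro ⟨t, ht : 2 * r < t, rfl⟩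
    have ht0 : 0 < t := by linarith
    refine ⟨by positivity, ?_⟩
    rw [div_lt_iff₀ ht0]
    nlinarith
  · rintro ⟨hs0, hs⟩
    refine ⟨4 * r ^ 2 / s, ?_, by field_simp⟩
    show 2 * r < 4 * r ^ 2 / s
    rw [lt_div_iff₀ hs0]
    nlinarith

/-- The exponent `s / 4 + r ^ 2 / s` is invariant under `s ↦ 4 r ^ 2 / s`, which maps `(2r, ∞)`
onto `(0, 2r)` with Jacobian `(2r / t) ^ 2 ≤ 1`. -/
lemma setIntegral_Ioo_besselIntegrand_le (hp : -1 < p) {r : ℝ} (hr : 0 < r) :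
    ∫ s in Ioo 0 (2 * r), besselIntegrand p r s ≤
      ∫ t in Ioi (2 * r), besselIntegrand p r t := by
  have hderiv : ∀ t ∈ Ioi (2 * r),
      HasDerivWithinAt (fun t => 4 * r ^ 2 / t) (-(4 * r ^ 2) / t ^ 2) (Ioi (2 * r)) t := by
    intro t (ht : 2 * r < t)
    have := ((hasDerivAt_inv (by linarith : t ≠ 0)).const_mul (4 * r ^ 2)).hasDerivWithinAt
      (s := Ioi (2 * r))
    simpa only [div_eq_mul_inv, neg_mul, mul_neg] using this
  have hinj : InjOn (fun t => 4 * r ^ 2 / t) (Ioi (2 * r)) := by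
    intro t ht t' ht' h
    have : (0 : ℝ) < 4 * r ^ 2 := by positivity
    exact inv_injective (mul_left_cancel₀ this.ne' (by simpa [div_eq_mul_inv] using h))
  rw [← image_four_mul_sq_div_Ioi hr,
    integral_image_eq_integral_abs_deriv_smul measurableSet_Ioi hderiv hinj]
  have hint := (integrableOn_besselIntegrand hp r).mono_set
    (Ioi_subset_Ioi (by positivity : 0 ≤ 2 * r))
  refine setIntegral_mono_on ?_ hint measurableSet_Ioi fun t (ht : 2 * r < t) => ?_
  · refine
      (integrableOn_image_iff_integrableOn_abs_deriv_smul measurableSet_Ioi hderiv hinj _).1 ?_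
    rw [image_four_mul_sq_div_Ioi hr]
    exact (integrableOn_besselIntegrand hp r).mono_set Ioo_subset_Ioi_self
  · have ht0 : 0 < t := by linarith
    rw [abs_div, abs_neg, abs_of_pos (by positivity : (0 : ℝ) < 4 * r ^ 2),
      abs_of_pos (by positivity), smul_eq_mul, besselIntegrand_four_mul_sq_div p hr ht0]
    refine mul_le_of_le_one_left (besselIntegrand_nonneg p r ht0.le)
      (rpow_le_one (by positivity) ?_ (by linarith))
    rw [div_le_one ht0]
    exact ht.le

lemma besselIntegral_le_two_mul_setIntegral_Ioi (hp : -1 < p) {r : ℝ} (hr : 0 < r) :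
    besselIntegral p r ≤ 2 * ∫ t in Ioi (2 * r), besselIntegrand p r t := by
  have hint := integrableOn_besselIntegrand hp r
  have hsplit : besselIntegral p r = (∫ s in Ioo 0 (2 * r), besselIntegrand p r s) +
      ∫ t in Ici (2 * r), besselIntegrand p r t := by
    have hunion := Ioo_union_Ici_eq_Ioi (by positivity : (0 : ℝ) < 2 * r)
    rw [← hunion] at hint
    rw [besselIntegral, ← hunion]
    exact setIntegral_union ((Iio_disjoint_Ici le_rfl).mono_left Ioo_subset_Iio_self)
      measurableSet_Ici (hint.mono_set subset_union_left) (hint.mono_set subset_union_right)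
  rw [hsplit, integral_Ici_eq_integral_Ioi]
  linarith [setIntegral_Ioo_besselIntegrand_le hp hr]

lemma exp_mul_besselIntegrand_le_add {r b t : ℝ} (hr : 1 ≤ r) (hb : 0 ≤ b) (ht : 2 * r < t) :
    exp (-(b + b ^ 2 / 2)) * besselIntegrand p r t ≤ besselIntegrand p (r + b) t := by
  have ht0 : 0 < t := by linarith
  have hsq : (r + b) ^ 2 / t ≤ b + b ^ 2 / 2 + r ^ 2 / t := by
    rw [← sub_le_iff_le_add, ← sub_div, div_le_iff₀ ht0]
    nlinarith [mul_nonneg hb (by linarith : 0 ≤ t - 2 * r),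
      mul_nonneg (sq_nonneg b) (by linarith : 0 ≤ t - 2)]
  unfold besselIntegrand
  rw [mul_left_comm, ← exp_add]
  gcongr
  linarith

lemma exp_mul_besselIntegral_le_add (hp : -1 < p) {r b : ℝ} (hr : 1 ≤ r)
    (hb : 0 ≤ b) :
    exp (-(b + b ^ 2 / 2)) / 2 * besselIntegral p r ≤ besselIntegral p (r + b) := by
  have hsub : Ioi (2 * r) ⊆ Ioi 0 := Ioi_subset_Ioi (by linarith)
  calc exp (-(b + b ^ 2 / 2)) / 2 * besselIntegral p r
      ≤ exp (-(b + b ^ 2 / 2)) * ∫ t in Ioi (2 * r), besselIntegrand p r t := by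
        rw [div_mul_eq_mul_div, div_le_iff₀ two_pos, mul_assoc]
        gcongr
        linarith [besselIntegral_le_two_mul_setIntegral_Ioi hp (by linarith : 0 < r)]
    _ = ∫ t in Ioi (2 * r), exp (-(b + b ^ 2 / 2)) * besselIntegrand p r t :=
        (integral_const_mul _ _).symm
    _ ≤ ∫ t in Ioi (2 * r), besselIntegrand p (r + b) t :=
        setIntegral_mono_on (((integrableOn_besselIntegrand hp r).mono_set hsub).const_mul _)
          ((integrableOn_besselIntegrand hp _).mono_set hsub) measurableSet_Ioi
          fun t ht => exp_mul_besselIntegrand_le_add hr hb ht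
    _ ≤ besselIntegral p (r + b) :=
        setIntegral_mono_set (integrableOn_besselIntegrand hp _)
          ((ae_restrict_mem measurableSet_Ioi).mono
            fun s hs => besselIntegrand_nonneg p _ (le_of_lt hs))
          hsub.eventuallyLE

lemma exists_pos_mul_besselIntegral_le_add (hp : -1 < p) {b : ℝ} (hb : 0 ≤ b) :
    ∃ c > 0, ∀ r, 0 ≤ r → c * besselIntegral p r ≤ besselIntegral p (r + b) := by
  have hJ0 := besselIntegral_pos hp 0
  set c₁ := besselIntegral p (1 + b) / besselIntegral p 0
  set c₂ := exp (-(b + b ^ 2 / 2)) / 2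
  have hc₁ : 0 < c₁ := div_pos (besselIntegral_pos hp _) hJ0
  refine ⟨min c₁ c₂, lt_min hc₁ (by positivity), fun r hr => ?_⟩
  have hJr := besselIntegral_pos hp r
  rcases le_total r 1 with hr1 | hr1
  · calc min c₁ c₂ * besselIntegral p r ≤ c₁ * besselIntegral p 0 :=
          mul_le_mul (min_le_left _ _) (besselIntegral_antitoneOn hp self_mem_Ici hr hr)
            hJr.le hc₁.le
      _ = besselIntegral p (1 + b) := div_mul_cancel₀ _ hJ0.ne'
      _ ≤ besselIntegral p (r + b) :=
          besselIntegral_antitoneOn hp (mem_Ici.2 (by linarith)) (mem_Ici.2 (by linarith))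
            (by linarith)
  · exact (mul_le_mul_of_nonneg_right (min_le_right _ _) hJr.le).trans
      (exp_mul_besselIntegral_le_add hp hr1 hb)

end

lemma Ifun_eq_besselIntegral (d : ℕ) (α r : ℝ) :
    Ifun d α r = besselIntegral (((d : ℝ) + α) / 2 - 1) r := rfl

lemma Psi_nonneg {d : ℕ} {α : ℝ} (hdα : 0 < (d : ℝ) + α) (r : ℝ) : 0 ≤ Psi d α r := by
  have hp : -1 < ((d : ℝ) + α) / 2 - 1 := by linarith
  rw [Psi, Ifun_eq_besselIntegral, Ifun_eq_besselIntegral]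
  exact div_nonneg (besselIntegral_pos hp r).le (besselIntegral_pos hp 0).le

lemma exists_pos_mul_Psi_le {d : ℕ} {α : ℝ} (hdα : 0 < (d : ℝ) + α) {b : ℝ}
    (hb : 0 ≤ b) :
    ∃ c > 0, ∀ r r', 0 ≤ r → 0 ≤ r' → r' ≤ r + b → c * Psi d α r ≤ Psi d α r' := by
  have hp : -1 < ((d : ℝ) + α) / 2 - 1 := by linarith
  obtain ⟨c, hc, hshift⟩ := exists_pos_mul_besselIntegral_le_add hp hb
  refine ⟨c, hc, fun r r' hr hr' hrr' => ?_⟩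
  simp only [Psi, Ifun_eq_besselIntegral, mul_div_assoc']
  exact div_le_div_of_nonneg_right ((hshift r hr).trans
    (besselIntegral_antitoneOn hp hr' (mem_Ici.2 (by positivity)) hrr'))
    (besselIntegral_pos hp 0).le

lemma norm_sub_le_one_add_div_mul_norm {E : Type*} [SeminormedAddCommGroup E] {x y : E} {R ε : ℝ}
    (hx : ‖x‖ ≤ R) (hε : 0 < ε) (hy : ε ≤ ‖y‖) :
    ‖x - y‖ ≤ (1 + R / ε) * ‖y‖ := by
  have hR : R ≤ R / ε * ‖y‖ := by
    rw [div_mul_eq_mul_div, le_div_iff₀ hε]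
    exact mul_le_mul_of_nonneg_left hy ((norm_nonneg x).trans hx)
  linarith [norm_sub_le x y]

theorem stmt_14_general (d : ℕ) (α : ℝ) (hα : 0 < α)
    (m : ℝ) (hm : 0 ≤ m) (U V : Set (EuclideanSpace ℝ (Fin d)))
    (hbdd : ∃ R : ℝ, ∀ z ∈ U, ‖z‖ ≤ R)
    (hsep0 : ∃ ε : ℝ, 0 < ε ∧ ∀ y ∉ V, ε ≤ ‖y‖) :
    ∃ C₁ : ℝ, 0 < C₁ ∧ ∀ x ∈ U, ∀ y ∉ V,
      C₁ * Psi d α (m ^ (1 / α) * ‖y‖) * ‖x - y‖ ^ ((d : ℝ) + α) ≤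
        Psi d α (m ^ (1 / α) * ‖x - y‖) * max 1 (‖y‖ ^ ((d : ℝ) + α)) := by
  obtain ⟨R, hR⟩ := hbdd
  obtain ⟨ε, hε, hεV⟩ := hsep0
  have hdα : 0 < (d : ℝ) + α := by positivity
  have ha : 0 ≤ m ^ (1 / α) := rpow_nonneg hm _
  have hR₀ : 0 ≤ max R 0 := le_max_right R 0
  obtain ⟨c, hc, hPsi⟩ := exists_pos_mul_Psi_le hdα (mul_nonneg ha hR₀)
  set K := (1 + max R 0 / ε) ^ ((d : ℝ) + α)
  have hK : 0 < K := by positivity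
  refine ⟨c / K, by positivity, fun x hx y hy => ?_⟩
  have hxR : ‖x‖ ≤ max R 0 := (hR x hx).trans (le_max_left R 0)
  have hΨ : c * Psi d α (m ^ (1 / α) * ‖y‖) ≤ Psi d α (m ^ (1 / α) * ‖x - y‖) :=
    hPsi _ _ (by positivity) (by positivity) (by
      rw [← mul_add]
      exact mul_le_mul_of_nonneg_left ((norm_sub_le x y).trans (by linarith)) ha)
  have hnorm : ‖x - y‖ ^ ((d : ℝ) + α) ≤ K * ‖y‖ ^ ((d : ℝ) + α) := by
    rw [← mul_rpow (by positivity) (norm_nonneg y)]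
    exact rpow_le_rpow (norm_nonneg _)
      (norm_sub_le_one_add_div_mul_norm hxR hε (hεV y hy)) hdα.le
  have hΨy := Psi_nonneg hdα (m ^ (1 / α) * ‖y‖)
  calc c / K * Psi d α (m ^ (1 / α) * ‖y‖) * ‖x - y‖ ^ ((d : ℝ) + α)
      ≤ c / K * Psi d α (m ^ (1 / α) * ‖y‖) * (K * ‖y‖ ^ ((d : ℝ) + α)) := by gcongr
    _ = c * Psi d α (m ^ (1 / α) * ‖y‖) * ‖y‖ ^ ((d : ℝ) + α) := by field_simp
    _ ≤ Psi d α (m ^ (1 / α) * ‖x - y‖) * max 1 (‖y‖ ^ ((d : ℝ) + α)) :=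
        mul_le_mul hΨ (le_max_right _ _) (by positivity) (Psi_nonneg hdα _)

/-- Let `m ≥ 0` and let `U, V ⊆ ℝᵈ` satisfy `sup_{z∈U}‖z‖ < ∞`,
`inf{‖x−y‖ : x ∈ U, y ∈ ℝᵈ∖V} > 0` and `inf{‖y‖ : y ∈ ℝᵈ∖V} > 0`. Then there is
`C₁ > 0` such that for every `x ∈ U` and `y ∈ ℝᵈ∖V`,
`C₁·Ψ(m^{1/α}‖y‖)·‖x−y‖^{d+α} ≤ Ψ(m^{1/α}‖x−y‖)·max(1, ‖y‖^{d+α})`. -/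
theorem stmt_14 (d : ℕ) (hd : 1 ≤ d) (α : ℝ) (hα : 0 < α) (hα2 : α < 2)
    (m : ℝ) (hm : 0 ≤ m) (U V : Set (EuclideanSpace ℝ (Fin d)))
    (hbdd : ∃ R : ℝ, ∀ z ∈ U, ‖z‖ ≤ R)
    (hsep : ∃ δ : ℝ, 0 < δ ∧ ∀ x ∈ U, ∀ y ∉ V, δ ≤ ‖x - y‖)
    (hsep0 : ∃ ε : ℝ, 0 < ε ∧ ∀ y ∉ V, ε ≤ ‖y‖) :
    ∃ C₁ : ℝ, 0 < C₁ ∧ ∀ x ∈ U, ∀ y ∉ V,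
      C₁ * Psi d α (m ^ (1 / α) * ‖y‖) * ‖x - y‖ ^ ((d : ℝ) + α) ≤
        Psi d α (m ^ (1 / α) * ‖x - y‖) * max 1 (‖y‖ ^ ((d : ℝ) + α)) :=
  stmt_14_general d α hα m hm U V hbdd hsep0
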